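/- Let T be a tree on n > 2 vertices with distance squared matrix Δ, and let t be the number of vertices of degree 2 in T. Then i_0(Δ) = t − 1 if t ≥ 2, and i_0(Δ) = 0 if t = 0 or t = 1. -/

import Mathlib

open Matrix

/-- The distance squared matrix of a graph. -/
noncomputable def distSqMatrix {V : Type*} [Fintype V] (G : SimpleGraph V) :
    Matrix V V ℝ := Matrix.of fun i j => ((G.dist i j : ℝ)) ^ 2

/-- number of positive eigenvalues (with multiplicity) of a real symmetric matrix -/
noncomputable def iPos {V : Type*} [Fintype V] [DecidableEq V] (M : Matrix V V ℝ) : ℕ :=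
  if h : M.IsHermitian then (Finset.univ.filter fun i => 0 < h.eigenvalues i).card else 0

/-- number of negative eigenvalues (with multiplicity) of a real symmetric matrix -/
noncomputable def iNeg {V : Type*} [Fintype V] [DecidableEq V] (M : Matrix V V ℝ) : ℕ :=
  if h : M.IsHermitian then (Finset.univ.filter fun i => h.eigenvalues i < 0).card else 0

/-- multiplicity of 0 as an eigenvalue of a real symmetric matrix -/
noncomputable def iZero {V : Type*} [Fintype V] [DecidableEq V] (M : Matrix V V ℝ) : ℕ :=
  if h : M.IsHermitian then (Finset.univ.filter fun i => h.eigenvalues i = 0).card else 0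

/-!
Write `L` for the Laplacian, `D` for the distance matrix and `τ = 2 - deg`. In a tree, exactly one
neighbour of `j ≠ i` is closer to `i` than `j` is; summing `g (d i k)` over the neighbours `k` of `j`
gives `D L = 1 τᵀ - 2 I` and `Δ L = 2 D diag τ - 1 degᵀ`, and, since `L 1 = 0`, also
`D τ = (n - 1) 1` and `Δ τ = 2 D 1 - (n - 1) 1`. The first identity (Graham–Lovász) makes `D`
injective and writes every vector as `L y + c τ`. If `Δ (L y + c τ) = 0`, then `τ * y + c` is a
multiple of `τ`; a vertex of degree 2 forces `c = 0`, and without one `c = 0` follows from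
`∑ 1 / τ i ≤ n - 1`. Hence `ker Δ = L W` for the space `W` of zero-sum vectors supported on the
vertices of degree 2; `L` is injective on `W` and `dim W = t - 1`.
-/

open Finset

theorem finrank_ker_sum_proj (K ι : Type*) [Field K] [Fintype ι] :
    Module.finrank K (LinearMap.ker (∑ i, LinearMap.proj i : (ι → K) →ₗ[K] K)) =
      Fintype.card ι - 1 := by
  cases isEmpty_or_nonempty ι with
  | inl _ =>
    have := Submodule.finrank_le (LinearMap.ker (∑ i, LinearMap.proj i : (ι → K) →ₗ[K] K))
    simp only [Module.finrank_fintype_fun_eq_card, Fintype.card_eq_zero] at this ⊢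
    omega
  | inr h =>
    classical
    obtain ⟨i⟩ := h
    have hne : (∑ i, LinearMap.proj i : (ι → K) →ₗ[K] K) ≠ 0 := fun h0 => by
      simpa [LinearMap.sum_apply] using LinearMap.congr_fun h0 (Pi.single i 1)
    have := Module.Dual.finrank_ker_add_one_of_ne_zero hne
    rw [Module.finrank_fintype_fun_eq_card] at this
    omega

theorem iZero_eq_finrank_ker {V : Type*} [Fintype V] [DecidableEq V] {A : Matrix V V ℝ}
    (hA : A.IsHermitian) : iZero A = Module.finrank ℝ (LinearMap.ker A.mulVecLin) := by
  have hrank := hA.rank_eq_card_non_zero_eigs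
  have hcard := Finset.card_filter_add_card_filter_not (s := Finset.univ)
    (fun i => hA.eigenvalues i = 0)
  have hrn := LinearMap.finrank_range_add_finrank_ker A.mulVecLin
  rw [Module.finrank_fintype_fun_eq_card] at hrn
  rw [Fintype.card_subtype] at hrank
  simp only [ne_eq] at hrank
  rw [iZero, dif_pos hA]
  change Module.finrank ℝ (LinearMap.range A.mulVecLin) = _ at hrank
  rw [Finset.card_univ] at hcard
  omega

theorem isHermitian_distSqMatrix {V : Type*} [Fintype V] (G : SimpleGraph V) :
    (distSqMatrix G).IsHermitian := by
  ext i j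
  simp [distSqMatrix, SimpleGraph.dist_comm]

namespace SimpleGraph

variable {V : Type*} [Fintype V] {G : SimpleGraph V} [DecidableRel G.Adj]

/-- The vector `τ` of Graham and Lovász. -/
noncomputable def tau (G : SimpleGraph V) [DecidableRel G.Adj] (v : V) : ℝ := 2 - G.degree v

noncomputable def distMatrix (G : SimpleGraph V) : Matrix V V ℝ := Matrix.of fun i j => G.dist i j

noncomputable def extendDegreeTwo (G : SimpleGraph V) [DecidableRel G.Adj] :
    ({v // G.degree v = 2} → ℝ) →ₗ[ℝ] V → ℝ where
  toFun z v := if h : G.degree v = 2 then z ⟨v, h⟩ else 0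
  map_add' z w := by ext v; by_cases h : G.degree v = 2 <;> simp [h]
  map_smul' c z := by ext v; by_cases h : G.degree v = 2 <;> simp [h]

theorem extendDegreeTwo_apply (z : {v // G.degree v = 2} → ℝ) (v : V) :
    G.extendDegreeTwo z v = if h : G.degree v = 2 then z ⟨v, h⟩ else 0 := rfl

theorem tau_mul_extendDegreeTwo_apply (z : {v // G.degree v = 2} → ℝ) (v : V) :
    G.tau v * G.extendDegreeTwo z v = 0 := by
  rw [extendDegreeTwo_apply]
  split_ifs with hv
  · simp [tau, hv]
  · simp

theorem sum_extendDegreeTwo_apply (z : {v // G.degree v = 2} → ℝ) :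
    ∑ v, G.extendDegreeTwo z v = ∑ s, z s := by
  rw [← Fintype.sum_subtype_add_sum_subtype (fun v => G.degree v = 2)]
  have h1 (s : {v // G.degree v = 2}) : G.extendDegreeTwo z s = z s := dif_pos s.2
  have h0 (s : {v // ¬G.degree v = 2}) : G.extendDegreeTwo z s = 0 := dif_neg s.2
  simp [h1, h0]

theorem eq_extendDegreeTwo_of_tau_mul_eq_zero {u : V → ℝ} (hu : ∀ v, G.tau v * u v = 0) :
    u = G.extendDegreeTwo fun s => u s := by
  ext v
  rw [extendDegreeTwo_apply]
  split_ifs with hv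
  · rfl
  · have : G.tau v ≠ 0 := by
      simp only [tau, sub_ne_zero]
      exact_mod_cast Ne.symm hv
    simpa [this] using hu v

theorem IsTree.sum_neighborFinset_comp_dist_of_ne {R : Type*} [AddCommMonoid R]
    (hG : G.IsTree) {i j : V} (hij : i ≠ j) (g : ℕ → R) :
    ∑ k ∈ G.neighborFinset j, g (G.dist i k) =
      g (G.dist i j - 1) + (G.degree j - 1) • g (G.dist i j + 1) := by
  classical
  obtain ⟨p, hp, hlen⟩ := hG.connected.exists_path_of_dist i j
  have hnil : ¬p.Nil := fun h => hij h.eq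
  have hu : p.penultimate ∈ G.neighborFinset j := by
    simpa using (p.adj_penultimate hnil).symm
  have hnear : G.dist i p.penultimate = G.dist i j - 1 := by
    have := dist_le p.dropLast
    rw [Walk.length_dropLast, hlen] at this
    have := hG.dist_eq_dist_add_one_of_adj i (p.adj_penultimate hnil)
    omega
  -- a second neighbour closer to `i` would give a second path from `i` to `j`
  have hfar : ∀ k ∈ (G.neighborFinset j).erase p.penultimate, G.dist i k = G.dist i j + 1 := by
    intro k hk
    obtain ⟨hku, hk⟩ := mem_erase.1 hk
    have hjk : G.Adj j k := (mem_neighborFinset _ _ _).1 hk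
    refine (hG.dist_eq_dist_add_one_of_adj i hjk).resolve_left fun h => hku ?_
    obtain ⟨q, -, hq⟩ := hG.connected.exists_path_of_dist i k
    have hqj : (q.concat hjk.symm).IsPath :=
      Walk.isPath_of_length_eq_dist _ (by rw [Walk.length_concat, hq, h])
    have := congrArg (fun r : G.Path i j => r.1.penultimate)
      ((hG.isAcyclic.subsingleton_path i j).elim ⟨_, hqj⟩ ⟨p, hp⟩)
    simpa [Walk.penultimate_concat] using this
  rw [← add_sum_erase _ _ hu, sum_congr rfl fun k hk => by rw [hfar k hk], sum_const,
    card_erase_of_mem hu, card_neighborFinset_eq_degree, hnear]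

theorem IsTree.sum_tau (hG : G.IsTree) : ∑ v, G.tau v = 2 := by
  have h : ∑ v, G.degree v + 2 = 2 * Fintype.card V := by
    rw [sum_degrees_eq_twice_card_edges, ← hG.card_edgeFinset]
    ring
  have h' : ∑ v, (G.degree v : ℝ) + 2 = 2 * Fintype.card V := by exact_mod_cast h
  simp only [tau, sum_sub_distrib, sum_const, card_univ, nsmul_eq_mul]
  linarith

theorem IsTree.sum_inv_tau_le (hG : G.IsTree) (hV : 2 < Fintype.card V)
    (hS : ∀ v, G.degree v ≠ 2) : ∑ v, (G.tau v)⁻¹ ≤ Fintype.card V - 1 := by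
  classical
  have : Nontrivial V := Fintype.one_lt_card_iff_nontrivial.1 (by omega)
  have hpos := hG.connected.preconnected.degree_pos_of_nontrivial (G := G)
  obtain ⟨v, hv⟩ : ∃ v, 3 ≤ G.degree v := by
    by_contra! h
    have hleaf : ∀ w, G.tau w = 1 := fun w => by
      have : G.degree w = 1 := by have := hpos w; have := hS w; have := h w; omega
      norm_num [tau, this]
    have := hG.sum_tau
    simp only [hleaf, sum_const, card_univ, nsmul_eq_mul, mul_one] at this
    have : (2 : ℝ) < Fintype.card V := by exact_mod_cast hV
    linarith
  have hle : ∀ w, (G.tau w)⁻¹ ≤ 1 - if w = v then 1 else 0 := by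
    intro w
    rcases (by have := hpos w; have := hS w; omega : G.degree w = 1 ∨ 3 ≤ G.degree w) with h | h
    · have : w ≠ v := by rintro rfl; omega
      norm_num [tau, h, this]
    · have : G.tau w < 0 := by
        have : (3 : ℝ) ≤ G.degree w := by exact_mod_cast h
        simp only [tau]
        linarith
      have := inv_lt_zero.2 this
      split_ifs <;> linarith
  calc ∑ w, (G.tau w)⁻¹ ≤ ∑ w, (1 - if w = v then (1 : ℝ) else 0) := sum_le_sum fun w _ => hle w
    _ = Fintype.card V - 1 := by simp [sum_sub_distrib]

theorem IsTree.eq_zero_of_tau_mul_add_eq_zero (hG : G.IsTree) (hV : 2 < Fintype.card V)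
    {u : V → ℝ} {c : ℝ} (hu : ∀ i, G.tau i * u i + c = 0)
    (hdeg : ∑ j, G.degree j * u j + c * (Fintype.card V - 1) = 0) : c = 0 := by
  by_cases hS : ∃ v, G.degree v = 2
  · obtain ⟨v, hv⟩ := hS
    simpa [tau, hv] using hu v
  push Not at hS
  have hτ : ∀ i, G.tau i ≠ 0 := fun i h => hS i <| by
    simp only [tau, sub_eq_zero] at h
    exact_mod_cast h.symm
  have hsum : ∑ j, G.degree j * u j = -c * (2 * ∑ j, (G.tau j)⁻¹ - Fintype.card V) := by
    have hj : ∀ j, G.degree j * u j = -c * (2 * (G.tau j)⁻¹ - 1) := fun j => by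
      have hd : (G.degree j : ℝ) = 2 - G.tau j := by simp [tau]
      have hu' : u j = -c * (G.tau j)⁻¹ := by
        field_simp [hτ j]
        linarith [hu j]
      rw [hd, hu']
      field_simp [hτ j]
    simp only [hj, ← mul_sum, sum_sub_distrib, sum_const, card_univ, nsmul_eq_mul, mul_one]
  have hH := hG.sum_inv_tau_le hV hS
  have : c * (2 * Fintype.card V - 1 - 2 * ∑ j, (G.tau j)⁻¹) = 0 := by linarith
  exact (mul_eq_zero.1 this).resolve_right (by linarith)

variable [DecidableEq V]

theorem mul_lapMatrix_apply {R : Type*} [Ring R] (M : Matrix V V R) (i j : V) :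
    (M * G.lapMatrix R) i j = M i j * G.degree j - ∑ k ∈ G.neighborFinset j, M i k := by
  rw [lapMatrix, Matrix.mul_sub, Matrix.sub_apply, degMatrix, Matrix.mul_diagonal,
    mul_adjMatrix_apply]

theorem sum_mul_lapMatrix_apply {R : Type*} [Ring R] (M : Matrix V V R) (i : V) :
    ∑ j, (M * G.lapMatrix R) i j = 0 := by
  have h : (M * G.lapMatrix R) *ᵥ (fun _ => 1) = 0 := by
    rw [← Matrix.mulVec_mulVec, lapMatrix_mulVec_const_eq_zero, Matrix.mulVec_zero]
  simpa [Matrix.mulVec, dotProduct] using congrFun h i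

-- The last term corrects the diagonal, where all neighbours are at distance `1`, not `d ± 1`.
theorem IsTree.comp_dist_mul_lapMatrix_apply (hG : G.IsTree) (g : ℝ → ℝ)
    (i j : V) :
    ((Matrix.of fun a b => g (G.dist a b)) * G.lapMatrix ℝ) i j =
      G.degree j * (g (G.dist i j) - g (G.dist i j + 1)) + g (G.dist i j + 1)
        - g (G.dist i j - 1) - if i = j then g 1 - g (-1) else 0 := by
  rw [mul_lapMatrix_apply]
  simp only [Matrix.of_apply]
  by_cases hij : i = j
  · subst hij
    have hnbr : ∀ k ∈ G.neighborFinset i, g (G.dist i k) = g 1 := fun k hk => by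
      rw [dist_eq_one_iff_adj.2 ((mem_neighborFinset _ _ _).1 hk), Nat.cast_one]
    rw [sum_congr rfl hnbr, sum_const, card_neighborFinset_eq_degree, nsmul_eq_mul, dist_self,
      if_pos rfl]
    push_cast
    ring_nf
  · have : Nontrivial V := ⟨⟨i, j, hij⟩⟩
    have hdeg := hG.connected.preconnected.degree_pos_of_nontrivial j
    have hdist := hG.connected.pos_dist_of_ne hij
    rw [hG.sum_neighborFinset_comp_dist_of_ne hij (fun d : ℕ => g d), if_neg hij, nsmul_eq_mul,
      Nat.cast_sub hdist, Nat.cast_sub hdeg]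
    push_cast
    ring

theorem IsTree.distMatrix_mul_lapMatrix (hG : G.IsTree) :
    distMatrix G * G.lapMatrix ℝ = Matrix.of fun i j => G.tau j - if i = j then 2 else 0 := by
  ext i j
  refine (hG.comp_dist_mul_lapMatrix_apply (fun x => x) i j).trans ?_
  simp only [tau, Matrix.of_apply]
  split_ifs <;> ring

theorem IsTree.distSqMatrix_mul_lapMatrix (hG : G.IsTree) :
    distSqMatrix G * G.lapMatrix ℝ =
      Matrix.of fun i j => 2 * G.tau j * G.dist i j - G.degree j := by
  ext i j
  refine (hG.comp_dist_mul_lapMatrix_apply (· ^ 2) i j).trans ?_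
  simp only [tau, Matrix.of_apply]
  split_ifs <;> ring

theorem IsTree.distMatrix_mulVec_tau (hG : G.IsTree) :
    distMatrix G *ᵥ G.tau = fun _ => (Fintype.card V - 1 : ℝ) := by
  ext i
  have h := sum_mul_lapMatrix_apply (G := G) (distSqMatrix G) i
  have hrow : ∀ j, (distSqMatrix G * G.lapMatrix ℝ) i j
      = 2 * (G.dist i j * G.tau j) + G.tau j - 2 := fun j => by
    rw [hG.distSqMatrix_mul_lapMatrix, Matrix.of_apply, tau]
    ring
  simp only [hrow, sum_add_distrib, sum_sub_distrib, ← mul_sum, hG.sum_tau, sum_const,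
    card_univ, nsmul_eq_mul] at h
  simp only [Matrix.mulVec, dotProduct, distMatrix, Matrix.of_apply]
  linarith

theorem IsTree.distSqMatrix_mulVec_tau (hG : G.IsTree) :
    distSqMatrix G *ᵥ G.tau = fun i => 2 * ∑ j, (G.dist i j : ℝ) - (Fintype.card V - 1) := by
  ext i
  have h := sum_mul_lapMatrix_apply (G := G) (Matrix.of fun a b => (G.dist a b : ℝ) ^ 3) i
  have hrow : ∀ j, ((Matrix.of fun a b => (G.dist a b : ℝ) ^ 3) * G.lapMatrix ℝ) i j
      = 3 * (G.dist i j ^ 2 * G.tau j) + 3 * (G.dist i j * G.tau j) + G.tau j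
        - 6 * G.dist i j - if i = j then 2 else 0 := fun j => by
    rw [hG.comp_dist_mul_lapMatrix_apply (· ^ 3), tau]
    split_ifs <;> ring
  have hτ := congrFun hG.distMatrix_mulVec_tau i
  simp only [Matrix.mulVec, dotProduct, distMatrix, Matrix.of_apply] at hτ
  simp only [hrow, sum_add_distrib, sum_sub_distrib, ← mul_sum, hτ, hG.sum_tau, sum_ite_eq,
    mem_univ, if_true] at h
  simp only [Matrix.mulVec, dotProduct, distSqMatrix, Matrix.of_apply]
  linarith

theorem IsTree.lapMatrix_mulVec_distMatrix_mulVec (hG : G.IsTree) (z : V → ℝ) :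
    G.lapMatrix ℝ *ᵥ (distMatrix G *ᵥ z) = (∑ i, z i) • G.tau - (2 : ℝ) • z := by
  have hD : (distMatrix G)ᵀ = distMatrix G := by
    ext i j
    simp [distMatrix, dist_comm]
  have hLD : G.lapMatrix ℝ * distMatrix G = (distMatrix G * G.lapMatrix ℝ)ᵀ := by
    rw [Matrix.transpose_mul, hD, (G.isSymm_lapMatrix ℝ).eq]
  ext i
  rw [Matrix.mulVec_mulVec, hLD, hG.distMatrix_mul_lapMatrix]
  simp only [Matrix.mulVec, dotProduct, Matrix.transpose_apply, Matrix.of_apply, sub_mul,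
    ite_mul, zero_mul, sum_sub_distrib, sum_ite_eq', mem_univ, if_true, ← mul_sum, Pi.sub_apply,
    Pi.smul_apply, smul_eq_mul]
  ring

theorem IsTree.distMatrix_mulVec_injective [Nontrivial V] (hG : G.IsTree) :
    Function.Injective (distMatrix G).mulVec := by
  intro z w h
  rw [← sub_eq_zero]
  set e := z - w
  have hDe : distMatrix G *ᵥ e = 0 := by rw [Matrix.mulVec_sub, h, sub_self]
  have he : e = ((∑ i, e i) / 2) • G.tau := by
    have h0 := hG.lapMatrix_mulVec_distMatrix_mulVec e
    rw [hDe, Matrix.mulVec_zero] at h0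
    ext i
    have := congrFun h0 i
    simp only [Pi.zero_apply, Pi.sub_apply, Pi.smul_apply, smul_eq_mul] at this ⊢
    linarith
  have hs : ∑ i, e i = 0 := by
    obtain ⟨v⟩ := (inferInstance : Nonempty V)
    have h0 := congrFun hDe v
    rw [he, Matrix.mulVec_smul, hG.distMatrix_mulVec_tau] at h0
    have hn : (Fintype.card V : ℝ) - 1 ≠ 0 := by
      have := Fintype.one_lt_card (α := V)
      rw [sub_ne_zero]
      exact_mod_cast this.ne'
    simpa [hn] using h0
  rw [he, hs]
  simp

theorem IsTree.distSqMatrix_mulVec_lapMatrix_mulVec_add_smul_tau (hG : G.IsTree) (y : V → ℝ)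
    (c : ℝ) :
    distSqMatrix G *ᵥ (G.lapMatrix ℝ *ᵥ y + c • G.tau) =
      (2 : ℝ) • distMatrix G *ᵥ (G.tau * y + fun _ => c)
        - fun _ => ∑ j, G.degree j * y j + c * (Fintype.card V - 1) := by
  ext i
  rw [Matrix.mulVec_add, Matrix.mulVec_smul, Matrix.mulVec_mulVec,
    hG.distSqMatrix_mul_lapMatrix, hG.distSqMatrix_mulVec_tau]
  have hrow : ∀ j, (2 * G.tau j * G.dist i j - G.degree j) * y j
      = 2 * (G.dist i j * (G.tau j * y j)) - G.degree j * y j := fun j => by ring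
  simp only [Matrix.mulVec, dotProduct, distMatrix, Matrix.of_apply, Pi.add_apply,
    Pi.smul_apply, Pi.sub_apply, Pi.mul_apply, smul_eq_mul, hrow, mul_add,
    sum_add_distrib, sum_sub_distrib, ← mul_sum, ← sum_mul]
  ring

theorem lapMatrix_mulVec_sub_const (y : V → ℝ) (a : ℝ) :
    G.lapMatrix ℝ *ᵥ (y - fun _ => a) = G.lapMatrix ℝ *ᵥ y := by
  rw [show (fun _ => a) = a • fun _ : V => (1 : ℝ) by ext; simp, Matrix.mulVec_sub,
    Matrix.mulVec_smul, G.lapMatrix_mulVec_const_eq_zero, smul_zero, sub_zero]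

theorem IsTree.exists_eq_lapMatrix_mulVec_add_smul_tau (hG : G.IsTree) (x : V → ℝ) :
    ∃ (y : V → ℝ) (c : ℝ), x = G.lapMatrix ℝ *ᵥ y + c • G.tau := by
  refine ⟨-(1 / 2 : ℝ) • distMatrix G *ᵥ x, (∑ i, x i) / 2, ?_⟩
  rw [Matrix.mulVec_smul, hG.lapMatrix_mulVec_distMatrix_mulVec]
  ext i
  simp only [Pi.add_apply, Pi.smul_apply, Pi.sub_apply, smul_eq_mul]
  ring

theorem IsTree.exists_lapMatrix_repr_of_distSqMatrix_mulVec_eq_zero [Nontrivial V]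
    (hG : G.IsTree) {x : V → ℝ} (hx : distSqMatrix G *ᵥ x = 0) :
    ∃ (u : V → ℝ) (c : ℝ), x = G.lapMatrix ℝ *ᵥ u + c • G.tau ∧
      (∀ i, G.tau i * u i + c = 0) ∧ ∑ j, G.degree j * u j + c * (Fintype.card V - 1) = 0 := by
  obtain ⟨v⟩ := (inferInstance : Nonempty V)
  have hn : (Fintype.card V : ℝ) - 1 ≠ 0 := by
    rw [sub_ne_zero]
    exact_mod_cast (Fintype.one_lt_card (α := V)).ne'
  obtain ⟨y, c, rfl⟩ := hG.exists_eq_lapMatrix_mulVec_add_smul_tau x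
  have h := hx
  rw [hG.distSqMatrix_mulVec_lapMatrix_mulVec_add_smul_tau, sub_eq_zero] at h
  set l := (∑ j, G.degree j * y j + c * (Fintype.card V - 1)) / (2 * (Fintype.card V - 1))
    with hl
  -- `h` says that `D (τ * y + c)` is constant, hence a multiple of `D τ = (n - 1) 1`
  have hyc : G.tau * y + (fun _ => c) = l • G.tau := by
    apply hG.distMatrix_mulVec_injective
    rw [Matrix.mulVec_smul, hG.distMatrix_mulVec_tau]
    ext i
    have := congrFun h i
    simp only [Pi.smul_apply, smul_eq_mul] at this ⊢
    rw [hl]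
    field_simp
    linarith
  have hu : ∀ i, G.tau i * (y i - l) + c = 0 := fun i => by
    have := congrFun hyc i
    simp only [Pi.add_apply, Pi.mul_apply, Pi.smul_apply, smul_eq_mul] at this
    linarith
  have hzero : G.tau * (y - fun _ => l) + (fun _ => c) = 0 := funext hu
  rw [← lapMatrix_mulVec_sub_const y l] at hx ⊢
  refine ⟨_, c, rfl, hu, ?_⟩
  rw [hG.distSqMatrix_mulVec_lapMatrix_mulVec_add_smul_tau, hzero] at hx
  have := congrFun hx v
  simp only [Matrix.mulVec_zero, smul_zero, Pi.sub_apply, Pi.zero_apply, zero_sub,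
    neg_eq_zero] at this
  exact this

theorem IsTree.ker_distSqMatrix_eq_range (hG : G.IsTree) (hV : 2 < Fintype.card V) :
    LinearMap.ker (distSqMatrix G).mulVecLin =
      LinearMap.range ((G.lapMatrix ℝ).mulVecLin ∘ₗ G.extendDegreeTwo ∘ₗ
        (LinearMap.ker (∑ s, LinearMap.proj s : ({v // G.degree v = 2} → ℝ) →ₗ[ℝ] ℝ)).subtype) := by
  have : Nontrivial V := Fintype.one_lt_card_iff_nontrivial.1 (by omega)
  have hdeg (u : V → ℝ) : ∑ j, (G.degree j : ℝ) * u j = 2 * ∑ j, u j - ∑ j, G.tau j * u j := by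
    simp only [tau, sub_mul, sum_sub_distrib, mul_sum]
    ring
  ext x
  simp only [LinearMap.mem_ker, Matrix.mulVecLin_apply, LinearMap.mem_range,
    LinearMap.coe_comp, Function.comp_apply, Submodule.coe_subtype, Subtype.exists,
    LinearMap.sum_apply, LinearMap.proj_apply, exists_prop]
  constructor
  · intro hx
    obtain ⟨u, c, rfl, hu, hsum⟩ := hG.exists_lapMatrix_repr_of_distSqMatrix_mulVec_eq_zero hx
    obtain rfl := hG.eq_zero_of_tau_mul_add_eq_zero hV hu hsum
    have hτu : ∀ v, G.tau v * u v = 0 := by simpa using hu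
    have hext := eq_extendDegreeTwo_of_tau_mul_eq_zero hτu
    refine ⟨fun s => u s, ?_, by rw [← hext, zero_smul, add_zero]⟩
    rw [← sum_extendDegreeTwo_apply, ← hext]
    simp only [hdeg, hτu, sum_const_zero] at hsum
    linarith
  · rintro ⟨z, hz, rfl⟩
    have h := hG.distSqMatrix_mulVec_lapMatrix_mulVec_add_smul_tau (G.extendDegreeTwo z) 0
    have hτz : G.tau * G.extendDegreeTwo z + (fun _ => 0) = 0 :=
      funext fun v => by simp [tau_mul_extendDegreeTwo_apply]
    rw [zero_smul, add_zero] at h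
    rw [h, hτz, hdeg]
    simp [tau_mul_extendDegreeTwo_apply, sum_extendDegreeTwo_apply, hz]
    rfl

theorem IsTree.finrank_ker_distSqMatrix (hG : G.IsTree) (hV : 2 < Fintype.card V) :
    Module.finrank ℝ (LinearMap.ker (distSqMatrix G).mulVecLin) =
      (univ.filter fun v => G.degree v = 2).card - 1 := by
  rw [hG.ker_distSqMatrix_eq_range hV, LinearMap.finrank_range_of_inj, finrank_ker_sum_proj,
    Fintype.card_subtype]
  refine (injective_iff_map_eq_zero _).2 fun ⟨z, hz⟩ h0 => ?_
  simp only [LinearMap.mem_ker, LinearMap.sum_apply, LinearMap.proj_apply] at hz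
  simp only [LinearMap.coe_comp, Function.comp_apply, Submodule.coe_subtype,
    Matrix.mulVecLin_apply, lapMatrix_mulVec_eq_zero_iff_forall_reachable] at h0
  obtain ⟨v⟩ := hG.connected.nonempty
  have hconst : ∀ w, G.extendDegreeTwo z w = G.extendDegreeTwo z v :=
    fun w => h0 w v (hG.connected w v)
  have hv : G.extendDegreeTwo z v = 0 := by
    have h := sum_extendDegreeTwo_apply (G := G) z
    simp only [hconst, sum_const, card_univ, nsmul_eq_mul, hz] at h
    exact (mul_eq_zero.1 h).resolve_left (by simp; omega)
  ext s
  exact (dif_pos s.2).symm.trans ((hconst s).trans hv)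

end SimpleGraph

theorem stmt6 {n : ℕ} (hn : 2 < n)
    (T : SimpleGraph (Fin n)) [DecidableRel T.Adj] (hT : T.IsTree)
    (t : ℕ) (ht : t = (Finset.univ.filter fun v => T.degree v = 2).card) :
    (2 ≤ t → iZero (distSqMatrix T) = t - 1) ∧
    (t ≤ 1 → iZero (distSqMatrix T) = 0) := by
  have h := hT.finrank_ker_distSqMatrix (by simpa using hn)
  rw [← iZero_eq_finrank_ker (isHermitian_distSqMatrix T), ← ht] at h
  constructor <;> intro <;> omega
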